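/- Let $\ell \in \mathbb{N}$ and let $\alpha$ be an arbitrary type (of 'anchor' vertices). Suppose that for every $i \in \mathrm{Fin}\,\ell$ we are given a base outdegree $g(i) \in \mathbb{N}$ and two arc-targets $t_1(i), t_2(i) \in \mathrm{Fin}\,\ell \oplus \alpha$, with the property that whenever a target $t_k(i)$ equals $\mathrm{inl}(j)$ for some $j \in \mathrm{Fin}\,\ell$, then $j < i$. A reorientation is a choice $\varepsilon : \mathrm{Fin}\,\ell \to \mathrm{Bool} \times \mathrm{Bool}$, where the $k$-th arc of vertex $i$ is called forward if the $k$-th component of $\varepsilon(i)$ is true and backward otherwise. Define the resulting outdegree of $i$ as $g(i)$ plus the number of forward arcs of $i$ plus the number of pairs $(j,k)$ with $j \in \mathrm{Fin}\,\ell$, $k \in \{1,2\}$, such that the $k$-th arc of $j$ is backward and $t_k(j) = \mathrm{inl}(i)$. Then for every demand function $d : \mathrm{Fin}\,\ell \to \mathbb{Z}/3\mathbb{Z}$ there exists a reorientation $\varepsilon$ such that for every $i \in \mathrm{Fin}\,\ell$ the resulting outdegree of $i$ is congruent to $d(i)$ modulo $3$. -/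

import Mathlib

/-!
Orient the vertices from last to first. The backward arcs entering `i` all start at later
vertices, so once those are oriented the in-part of the outdegree of `i` is fixed, and keeping
0, 1 or 2 of the arcs of `i` forward reaches every residue mod 3.
-/

open Finset

theorem exists_forall_of_exists_choice_above {ι β : Type*} [Preorder ι] [WellFoundedGT ι]
    [Nonempty β] (P : ι → (ι → β) → Prop)
    (hP : ∀ i (ε : ι → β), ∃ b, ∀ ε' : ι → β, ε' i = b → (∀ j, i < j → ε' j = ε j) → P i ε') :
    ∃ ε : ι → β, ∀ i, P i ε := by
  classical
  let extend (i : ι) (f : ∀ j, i < j → β) : ι → β :=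
    fun j => if hj : i < j then f j hj else Classical.arbitrary β
  let ε : ι → β := WellFoundedGT.fix fun i f => Classical.choose (hP i (extend i f))
  refine ⟨ε, fun i => Classical.choose_spec (hP i (extend i fun j _ => ε j)) ε ?_ ?_⟩
  · exact WellFoundedGT.fix_eq _ i
  · intro j hj
    simp only [extend, dif_pos hj]

theorem ZMod.exists_bool_pair_sum_eq (c : ZMod 3) :
    ∃ b : Bool × Bool, (((if b.1 then 1 else 0) + (if b.2 then 1 else 0) : ℕ) : ZMod 3) = c := by
  revert c; decide

section Backward

open scoped Classical

variable {ℓ : ℕ} {α : Type*}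

/-- `arc` selects one of the two arcs of each vertex; `false` means it is reoriented backwards. -/
noncomputable def backwardInto (arc : Bool × Bool → Bool) (t : Fin ℓ → Fin ℓ ⊕ α)
    (ε : Fin ℓ → Bool × Bool) (i : Fin ℓ) : ℕ :=
  #{j | arc (ε j) = false ∧ t j = Sum.inl i}

theorem backwardInto_congr_of_eq_above {arc : Bool × Bool → Bool} {t : Fin ℓ → Fin ℓ ⊕ α}
    (ht : ∀ i j, t i = Sum.inl j → j < i) {ε ε' : Fin ℓ → Bool × Bool} {i : Fin ℓ}
    (hε : ∀ j, i < j → ε j = ε' j) : backwardInto arc t ε i = backwardInto arc t ε' i := by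
  unfold backwardInto
  congr 1
  refine filter_congr fun j _ => and_congr_left fun hj => ?_
  rw [hε j (ht j i hj)]

end Backward

open scoped Classical in
/-- reorienting the two `B`-arcs of each vertex (each heading to a
strictly earlier vertex or to an anchor in `α`) so that every vertex attains any
prescribed outdegree residue mod 3. -/
theorem reorient_two_arcs (ℓ : ℕ) (α : Type*) (g : Fin ℓ → ℕ)
    (t₁ t₂ : Fin ℓ → (Fin ℓ ⊕ α))
    (h₁ : ∀ i j, t₁ i = Sum.inl j → j < i)
    (h₂ : ∀ i j, t₂ i = Sum.inl j → j < i)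
    (d : Fin ℓ → ZMod 3) :
    ∃ ε : Fin ℓ → Bool × Bool, ∀ i : Fin ℓ,
      ((g i
        + (if (ε i).1 then 1 else 0) + (if (ε i).2 then 1 else 0)
        + (Finset.univ.filter (fun j : Fin ℓ => (ε j).1 = false ∧ t₁ j = Sum.inl i)).card
        + (Finset.univ.filter (fun j : Fin ℓ => (ε j).2 = false ∧ t₂ j = Sum.inl i)).card
        : ℕ) : ZMod 3) = d i := by
  refine exists_forall_of_exists_choice_above _ fun i ε => ?_
  obtain ⟨b, hb⟩ := ZMod.exists_bool_pair_sum_eq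
    (d i - g i - backwardInto Prod.fst t₁ ε i - backwardInto Prod.snd t₂ ε i)
  refine ⟨b, fun ε' hi hε => ?_⟩
  change ((g i + (if (ε' i).1 then 1 else 0) + (if (ε' i).2 then 1 else 0)
    + backwardInto Prod.fst t₁ ε' i + backwardInto Prod.snd t₂ ε' i : ℕ) : ZMod 3) = d i
  rw [hi, backwardInto_congr_of_eq_above h₁ hε, backwardInto_congr_of_eq_above h₂ hε]
  push_cast at hb ⊢
  linear_combination hb
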